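/- If g is not structurally utilitarian, then there exist types φ₁ < φ₂ in (φ̲,φ̄) and a three times continuously differentiable tax policy T ∈ 𝒯̂ that is strictly increasing and strictly convex on [z_{φ̲}, z̄] such that either ∂ĝ_φ/∂z(U_φ(T), z_φ(T)) < 0 for all φ ∈ (φ₁,φ₂), or ∂ĝ_φ/∂z(U_φ(T), z_φ(T)) > 0 for all φ ∈ (φ₁,φ₂). -/

import Mathlib

open Set MeasureTheory

noncomputable section

namespace Stmt8

/-- Membership in `𝒮`. -/
def MemS (zbar zlo : ℝ) (T : ℝ → ℝ) : Prop :=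
  ContDiff ℝ 3 T ∧ (∀ z ∈ Icc (0:ℝ) zlo, deriv T z = 0) ∧
  ∀ z ∈ Icc zlo zbar, deriv T z ∈ Icc (0:ℝ) 1

/-- `g` is structurally utilitarian. -/
def StructUtil (philo phihi : ℝ) (v : ℝ → ℝ → ℝ) (zstar : ℝ → ℝ)
    (g : ℝ → ℝ → ℝ → ℝ) : Prop :=
  ∀ φ ∈ Icc philo phihi, ∀ z0 ∈ Icc (zstar philo) (zstar φ), ∀ z1 ∈ Icc (zstar philo) (zstar φ),
    ∀ c0 c1 : ℝ, c0 - v z0 φ = c1 - v z1 φ → g c0 z0 φ = g c1 z1 φ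

/-- `U_φ(T)`: type `φ`'s indirect utility in consumption units. -/
def Uphi (v : ℝ → ℝ → ℝ) (zopt : (ℝ → ℝ) → ℝ → ℝ) (T : ℝ → ℝ) (φ : ℝ) : ℝ :=
  zopt T φ - T (zopt T φ) - v (zopt T φ) φ

open Filter Topology
open scoped ContDiff

/-!
If `g` is not structurally utilitarian, there are a type `φ₀`, a utility level `u` and two incomes
in `[z_{φ̲}, z_{φ₀}]` at which `ĝ_{φ₀}(u, ·)` differs, so by the mean value theorem
`∂ĝ_{φ₀}/∂z (u, z₀) ≠ 0` for some `z₀` strictly between `z_{φ̲}` and `z_{φ₀}`. Take a smooth tax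
whose marginal rate vanishes below `z_{φ̲}`, increases strictly above it and equals
`1 - v_{φ₀}'(z₀) ∈ (0, 1)` at `z₀`, shifted so that `T(z₀) = z₀ - v_{φ₀}(z₀) - u`. Every type's
objective is then concave, so its first-order condition characterises `z_φ(T)`; in particular
`z_{φ₀}(T) = z₀` and `U_{φ₀}(T) = u`. As the first-order condition is strictly monotone in `z`,
`z_φ(T)` and `U_φ(T)` are continuous at `φ₀`, hence so is `∂ĝ_φ/∂z (U_φ(T), z_φ(T))`, which
therefore keeps the sign it has at `φ₀` on an interval of types.
-/

theorem expNegInvGlue_strictMonoOn : StrictMonoOn expNegInvGlue (Ici 0) := by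
  intro x hx y _ hxy
  rcases (mem_Ici.1 hx).eq_or_lt with rfl | hx
  · simpa using expNegInvGlue.pos_of_pos hxy
  · simp [expNegInvGlue, not_le.2 hx, not_le.2 (hx.trans hxy), inv_lt_inv₀ (hx.trans hxy) hx, hxy]

theorem exists_Ioo_subset_of_mem_nhdsWithin_Icc {α : Type*} [LinearOrder α] [TopologicalSpace α]
    [OrderTopology α] [DenselyOrdered α] [NoMinOrder α] [NoMaxOrder α] {a b x : α} {s : Set α}
    (hab : a < b) (hx : x ∈ Icc a b) (hs : s ∈ 𝓝[Icc a b] x) :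
    ∃ c d, a < c ∧ c < d ∧ d < b ∧ Ioo c d ⊆ s := by
  obtain ⟨U, hU, hxU, hUs⟩ := mem_nhdsWithin.1 hs
  obtain ⟨y, hyU, hy⟩ : (U ∩ Ioo a b).Nonempty :=
    mem_closure_iff.1 (by rwa [closure_Ioo hab.ne]) U hU hxU
  obtain ⟨l, u, ⟨hly, hyu⟩, hlu⟩ :=
    mem_nhds_iff_exists_Ioo_subset.1 ((hU.inter isOpen_Ioo).mem_nhds ⟨hyU, hy⟩)
  obtain ⟨c, hlc, hcy⟩ := exists_between hly
  obtain ⟨d, hyd, hdu⟩ := exists_between hyu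
  have hcd : Ioo c d ⊆ U ∩ Ioo a b := (Ioo_subset_Ioo hlc.le hdu.le).trans hlu
  exact ⟨c, d, (hlu ⟨hlc, hcy.trans hyu⟩).2.1, hcy.trans hyd, (hlu ⟨hly.trans hyd, hdu⟩).2.2,
    fun z hz => hUs ⟨(hcd hz).1, Ioo_subset_Icc_self (hcd hz).2⟩⟩

theorem _root_.Filter.Tendsto.exists_Ioo_forall_neg_or_forall_pos {a b x d : ℝ} {D : ℝ → ℝ}
    (hD : Tendsto D (𝓝[Icc a b] x) (𝓝 d)) (hd : d ≠ 0) (hab : a < b) (hx : x ∈ Icc a b) :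
    ∃ c e, a < c ∧ c < e ∧ e < b ∧ ((∀ y ∈ Ioo c e, D y < 0) ∨ ∀ y ∈ Ioo c e, 0 < D y) := by
  rcases hd.lt_or_gt with hneg | hpos
  · obtain ⟨c, e, hac, hce, heb, hsub⟩ :=
      exists_Ioo_subset_of_mem_nhdsWithin_Icc hab hx (hD.eventually (eventually_lt_nhds hneg))
    exact ⟨c, e, hac, hce, heb, Or.inl hsub⟩
  · obtain ⟨c, e, hac, hce, heb, hsub⟩ :=
      exists_Ioo_subset_of_mem_nhdsWithin_Icc hab hx (hD.eventually (eventually_gt_nhds hpos))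
    exact ⟨c, e, hac, hce, heb, Or.inr hsub⟩

theorem exists_mem_Ioo_deriv_ne_zero {f : ℝ → ℝ} {x y : ℝ} (hxy : x < y) (hne : f x ≠ f y)
    (hfc : ContinuousOn f (Icc x y)) (hfd : DifferentiableOn ℝ f (Ioo x y)) :
    ∃ z ∈ Ioo x y, deriv f z ≠ 0 := by
  obtain ⟨z, hz, hslope⟩ := exists_deriv_eq_slope f hxy hfc hfd
  exact ⟨z, hz, hslope ▸ div_ne_zero (sub_ne_zero.2 hne.symm) (sub_ne_zero.2 hxy.ne')⟩

theorem isMaxOn_Icc_of_hasDerivAt_of_antitoneOn {f f' : ℝ → ℝ} {a b r : ℝ}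
    (hf : ∀ x ∈ Icc a b, HasDerivAt f (f' x) x) (hf' : AntitoneOn f' (Icc a b))
    (hr : r ∈ Icc a b) (hr0 : f' r = 0) : IsMaxOn f (Icc a b) r := by
  have hcont : ContinuousOn f (Icc a b) := fun x hx => (hf x hx).continuousAt.continuousWithinAt
  have hle : Icc a r ⊆ Icc a b := Icc_subset_Icc_right hr.2
  have hge : Icc r b ⊆ Icc a b := Icc_subset_Icc_left hr.1
  have hmono : MonotoneOn f (Icc a r) := by
    refine monotoneOn_of_hasDerivWithinAt_nonneg (convex_Icc a r) (hcont.mono hle)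
      (fun x hx => (hf x (hle (interior_subset hx))).hasDerivWithinAt) fun x hx => ?_
    rw [interior_Icc] at hx
    exact hr0 ▸ hf' (hle (Ioo_subset_Icc_self hx)) hr hx.2.le
  have hanti : AntitoneOn f (Icc r b) := by
    refine antitoneOn_of_hasDerivWithinAt_nonpos (convex_Icc r b) (hcont.mono hge)
      (fun x hx => (hf x (hge (interior_subset hx))).hasDerivWithinAt) fun x hx => ?_
    rw [interior_Icc] at hx
    exact hr0 ▸ hf' hr (hge (Ioo_subset_Icc_self hx)) hx.1.le
  intro x hx
  rcases le_total x r with hxr | hrx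
  · exact hmono ⟨hx.1, hxr⟩ ⟨hr.1, le_rfl⟩ hxr
  · exact hanti ⟨le_rfl, hr.2⟩ ⟨hrx, hx.2⟩ hrx

theorem continuous_deriv_of_contDiff_uncurry {𝕜 E F : Type*} [NontriviallyNormedField 𝕜]
    [NormedAddCommGroup E] [NormedSpace 𝕜 E] [NormedAddCommGroup F] [NormedSpace 𝕜 F]
    {f : E → 𝕜 → F} (hf : ContDiff 𝕜 1 (Function.uncurry f)) :
    Continuous fun p : E × 𝕜 => deriv (f p.1) p.2 := by
  have hf' : ContDiff 𝕜 1 (Function.uncurry fun p : E × 𝕜 => f p.1) :=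
    hf.comp (contDiff_fst.fst.prodMk contDiff_snd)
  exact (Continuous.fderiv_one hf' continuous_snd).clm_apply continuous_const

theorem tendsto_nhdsWithin_of_forall_root_eq {X : Type*} [TopologicalSpace X] {ψ : X → ℝ → ℝ}
    {m : X → ℝ} {s : Set X} {x₀ : X} {lo hi z₀ c : ℝ} (hψ : Continuous (Function.uncurry ψ))
    (hmono : StrictMonoOn (ψ x₀) (Icc lo hi)) (hz₀ : z₀ ∈ Ioo lo hi) (hroot : ψ x₀ z₀ = c)
    (hm : ∀ x ∈ s, ∀ z ∈ Icc lo hi, ψ x z = c → m x = z) :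
    Tendsto m (𝓝[s] x₀) (𝓝 z₀) := by
  have bracket : ∀ l u, lo ≤ l → l < z₀ → z₀ < u → u ≤ hi → ∀ᶠ x in 𝓝[s] x₀, m x ∈ Icc l u := by
    intro l u hlo hl hu hhi
    have hl' : ψ x₀ l < c := hroot ▸ hmono ⟨hlo, hl.le.trans hz₀.2.le⟩ (Ioo_subset_Icc_self hz₀) hl
    have hu' : c < ψ x₀ u := hroot ▸ hmono (Ioo_subset_Icc_self hz₀) ⟨hz₀.1.le.trans hu.le, hhi⟩ hu
    have hcont : ∀ z, Continuous (ψ · z) := fun z => hψ.comp (continuous_id.prodMk continuous_const)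
    filter_upwards [self_mem_nhdsWithin,
      nhdsWithin_le_nhds ((hcont l).continuousAt.eventually (eventually_lt_nhds hl')),
      nhdsWithin_le_nhds ((hcont u).continuousAt.eventually (eventually_gt_nhds hu'))]
      with x hx hxl hxu
    obtain ⟨r, hr, hrc⟩ := intermediate_value_Icc (hl.trans hu).le
      (hψ.comp (continuous_const.prodMk continuous_id)).continuousOn ⟨hxl.le, hxu.le⟩
    exact hm x hx r ⟨hlo.trans hr.1, hr.2.trans hhi⟩ hrc ▸ hr
  refine tendsto_order.2 ⟨fun l' hl' => ?_, fun u' hu' => ?_⟩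
  · obtain ⟨l, hl, hlz⟩ := exists_between (max_lt hl' hz₀.1)
    obtain ⟨u, hzu, huh⟩ := exists_between hz₀.2
    filter_upwards [bracket l u ((le_max_right _ _).trans hl.le) hlz hzu huh.le] with x hx
    exact ((le_max_left _ _).trans_lt hl).trans_le hx.1
  · obtain ⟨u, hzu, hu⟩ := exists_between (lt_min hu' hz₀.2)
    obtain ⟨l, hll, hlz⟩ := exists_between hz₀.1
    filter_upwards [bracket l u hll.le hlz hzu (hu.trans_le (min_le_right _ _)).le] with x hx
    exact hx.2.trans_lt (hu.trans_le (min_le_left _ _))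

theorem exists_smooth_rate {a b t : ℝ} (hab : a < b) (ht : t ∈ Ioo 0 1) :
    ∃ h : ℝ → ℝ, ContDiff ℝ ∞ h ∧ Monotone h ∧ StrictMonoOn h (Ici a) ∧ (∀ z ≤ a, h z = 0) ∧
      (∀ z, h z < 1) ∧ h b = t := by
  set G : ℝ → ℝ := fun z => expNegInvGlue (z - a)
  set c := G b * (1 - t) / t
  have hGb : 0 < G b := expNegInvGlue.pos_of_pos (sub_pos.2 hab)
  have hc : 0 < c := div_pos (mul_pos hGb (sub_pos.2 ht.2)) ht.1
  have hden : ∀ z, 0 < G z + c := fun z => add_pos_of_nonneg_of_pos (expNegInvGlue.nonneg _) hc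
  refine ⟨fun z => 1 - c / (G z + c), ?_, fun x y hxy => ?_, fun x hx y hy hxy => ?_,
    fun z hz => ?_, fun z => sub_lt_self 1 (div_pos hc (hden z)), ?_⟩
  · exact contDiff_const.sub (contDiff_const.div
      ((expNegInvGlue.contDiff.comp (contDiff_id.sub contDiff_const)).add contDiff_const)
      fun z => (hden z).ne')
  · have hG : G x ≤ G y := expNegInvGlue.monotone (sub_le_sub_right hxy a)
    exact sub_le_sub_left (div_le_div_of_nonneg_left hc.le (hden x) (by gcongr)) 1
  · have hG : G x < G y := expNegInvGlue_strictMonoOn (mem_Ici.2 (sub_nonneg.2 hx))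
      (mem_Ici.2 (sub_nonneg.2 hy)) (sub_lt_sub_right hxy a)
    exact sub_lt_sub_left (div_lt_div_of_pos_left hc (hden x) (by gcongr)) 1
  · simp [G, expNegInvGlue.zero_of_nonpos (sub_nonpos.2 hz), hc.ne']
  · have ht0 : t ≠ 0 := ht.1.ne'
    simp only [c]
    field_simp
    ring

theorem exists_convex_tax {a b t : ℝ} (zbar y : ℝ) (hab : a < b) (ht : t ∈ Ioo 0 1) :
    ∃ T : ℝ → ℝ, MemS zbar a T ∧ Monotone (deriv T) ∧ deriv T b = t ∧ T b = y ∧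
      StrictMonoOn T (Icc a zbar) ∧ StrictConvexOn ℝ (Icc a zbar) T := by
  obtain ⟨h, hh, hmono, hsmono, hzero, hlt, hb⟩ := exists_smooth_rate hab ht
  set T : ℝ → ℝ := fun z => y + ∫ s in b..z, h s
  have hT : ∀ z, HasDerivAt T (h z) z := fun z =>
    (hh.continuous.integral_hasStrictDerivAt b z).hasDerivAt.const_add y
  have hT' : deriv T = h := funext fun z => (hT z).deriv
  have hTd : Differentiable ℝ T := fun z => (hT z).differentiableAt
  have hpos : ∀ z, a < z → 0 < h z := fun z hz =>
    hzero a le_rfl ▸ hsmono self_mem_Ici hz.le hz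
  refine ⟨T, ⟨?_, fun z hz => hT' ▸ hzero z hz.2, fun z hz => hT' ▸ ?_⟩, hT' ▸ hmono, hT' ▸ hb,
    by simp [T], ?_, ?_⟩
  · show ContDiff ℝ (2 + 1) T
    exact contDiff_succ_iff_deriv.2 ⟨hTd, by simp, hT' ▸ hh.of_le (by norm_cast)⟩
  · exact ⟨hzero a le_rfl ▸ hmono hz.1, (hlt z).le⟩
  · refine strictMonoOn_of_deriv_pos (convex_Icc a zbar) hTd.continuous.continuousOn fun z hz => ?_
    rw [interior_Icc] at hz
    exact hT' ▸ hpos z hz.1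
  · refine StrictMonoOn.strictConvexOn_of_deriv (convex_Icc a zbar) hTd.continuous.continuousOn ?_
    rw [hT', interior_Icc]
    exact hsmono.mono fun z hz => le_of_lt hz.1

section Model

variable {philo phihi zbar : ℝ} {v : ℝ → ℝ → ℝ} {zstar : ℝ → ℝ} {TT : Set (ℝ → ℝ)}
  {zopt : (ℝ → ℝ) → ℝ → ℝ} {g : ℝ → ℝ → ℝ → ℝ}

theorem contDiff_uncurry_reparamWeight
    (hv_smooth : ContDiff ℝ 3 (fun p : ℝ × ℝ => v p.1 p.2))
    (hg_smooth : ContDiff ℝ 3 (fun p : ℝ × ℝ × ℝ => g p.1 p.2.1 p.2.2)) :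
    ContDiff ℝ 3 (Function.uncurry fun q : ℝ × ℝ => fun w => g (q.1 + v w q.2) w q.2) :=
  hg_smooth.comp
    ((contDiff_fst.fst.add (hv_smooth.comp (contDiff_snd.prodMk contDiff_fst.snd))).prodMk
      (contDiff_snd.prodMk contDiff_fst.snd))

theorem strictMonoOn_deriv_slice (hv_smooth : ContDiff ℝ 3 (fun p : ℝ × ℝ => v p.1 p.2))
    (hv_iii : ∀ z ∈ Icc (0:ℝ) zbar, ∀ φ ∈ Icc philo phihi,
      0 < deriv (deriv (fun w => v w φ)) z)
    {φ : ℝ} (hφ : φ ∈ Icc philo phihi) :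
    StrictMonoOn (deriv (fun w => v w φ)) (Icc 0 zbar) :=
  strictMonoOn_of_deriv_pos (convex_Icc 0 zbar)
    ((hv_smooth.comp (contDiff_id.prodMk contDiff_const)).continuous_deriv
      (by norm_num)).continuousOn
    fun z hz => hv_iii z (interior_subset hz) φ hφ

theorem exists_deriv_reparamWeight_ne_zero
    (hĝ : ContDiff ℝ 1 (Function.uncurry fun q : ℝ × ℝ => fun w => g (q.1 + v w q.2) w q.2))
    (hnsu : ¬ StructUtil philo phihi v zstar g) :
    ∃ φ₀ ∈ Icc philo phihi, ∃ u z₀, zstar philo < z₀ ∧ z₀ < zstar φ₀ ∧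
      deriv (fun w => g (u + v w φ₀) w φ₀) z₀ ≠ 0 := by
  simp only [StructUtil, not_forall] at hnsu
  obtain ⟨φ₀, hφ₀, z₀, hz₀, z₁, hz₁, c₀, c₁, hc, hne⟩ := hnsu
  set f := fun w => g (c₀ - v z₀ φ₀ + v w φ₀) w φ₀
  have hfd : Differentiable ℝ f :=
    (hĝ.comp (contDiff_const (c := (c₀ - v z₀ φ₀, φ₀)).prodMk contDiff_id)).differentiable
      one_ne_zero
  have hf₀ : f z₀ = g c₀ z₀ φ₀ := by simp only [f, sub_add_cancel]
  have hf₁ : f z₁ = g c₁ z₁ φ₀ := by simp only [f, hc, sub_add_cancel]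
  have hf : f z₀ ≠ f z₁ := hf₀ ▸ hf₁ ▸ hne
  rcases lt_or_gt_of_ne (ne_of_apply_ne f hf) with hlt | hlt
  · obtain ⟨z, hz, hd⟩ := exists_mem_Ioo_deriv_ne_zero hlt hf hfd.continuous.continuousOn
      hfd.differentiableOn
    exact ⟨φ₀, hφ₀, _, z, hz₀.1.trans_lt hz.1, hz.2.trans_le hz₁.2, hd⟩
  · obtain ⟨z, hz, hd⟩ := exists_mem_Ioo_deriv_ne_zero hlt hf.symm hfd.continuous.continuousOn
      hfd.differentiableOn
    exact ⟨φ₀, hφ₀, _, z, hz₁.1.trans_lt hz.1, hz.2.trans_le hz₀.2, hd⟩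

theorem zopt_eq_of_deriv_add_deriv_eq_one
    (hzopt : ∀ T ∈ TT, ∀ φ ∈ Icc philo phihi,
      zopt T φ ∈ Icc (0:ℝ) zbar ∧
      IsMaxOn (fun z => z - T z - v z φ) (Icc (0:ℝ) zbar) (zopt T φ) ∧
      ∀ z ∈ Icc (0:ℝ) zbar,
        IsMaxOn (fun w => w - T w - v w φ) (Icc (0:ℝ) zbar) z → z = zopt T φ)
    {T : ℝ → ℝ} (hT : T ∈ TT) (hTd : Differentiable ℝ T) (hT' : Monotone (deriv T))
    {φ : ℝ} (hφ : φ ∈ Icc philo phihi) (hvd : Differentiable ℝ (fun w => v w φ))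
    (hv' : MonotoneOn (deriv (fun w => v w φ)) (Icc 0 zbar))
    {r : ℝ} (hr : r ∈ Icc 0 zbar) (hfoc : deriv T r + deriv (fun w => v w φ) r = 1) :
    zopt T φ = r := by
  refine ((hzopt T hT φ hφ).2.2 r hr ?_).symm
  refine isMaxOn_Icc_of_hasDerivAt_of_antitoneOn
    (f' := fun z => 1 - deriv T z - deriv (fun w => v w φ) z)
    (fun z _ => ((hasDerivAt_id z).sub (hTd z).hasDerivAt).sub (hvd z).hasDerivAt)
    (fun x hx y hy hxy => ?_) hr (by linarith)
  dsimp only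
  linarith [hT' hxy, hv' hx hy hxy]

theorem tendsto_zopt_nhdsWithin (hv_smooth : ContDiff ℝ 3 (fun p : ℝ × ℝ => v p.1 p.2))
    (hv' : ∀ φ ∈ Icc philo phihi, StrictMonoOn (deriv (fun w => v w φ)) (Icc 0 zbar))
    (hzopt : ∀ T ∈ TT, ∀ φ ∈ Icc philo phihi,
      zopt T φ ∈ Icc (0:ℝ) zbar ∧
      IsMaxOn (fun z => z - T z - v z φ) (Icc (0:ℝ) zbar) (zopt T φ) ∧
      ∀ z ∈ Icc (0:ℝ) zbar,
        IsMaxOn (fun w => w - T w - v w φ) (Icc (0:ℝ) zbar) z → z = zopt T φ)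
    {T : ℝ → ℝ} (hT : T ∈ TT) (hTc : ContDiff ℝ 1 T) (hT' : Monotone (deriv T))
    {φ₀ z₀ : ℝ} (hφ₀ : φ₀ ∈ Icc philo phihi) (hz₀ : z₀ ∈ Ioo 0 zbar)
    (hfoc : deriv T z₀ + deriv (fun w => v w φ₀) z₀ = 1) :
    Tendsto (zopt T) (𝓝[Icc philo phihi] φ₀) (𝓝 z₀) :=
  tendsto_nhdsWithin_of_forall_root_eq (ψ := fun φ z => deriv T z + deriv (fun w => v w φ) z)
    (((hTc.continuous_deriv le_rfl).comp continuous_snd).add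
      (continuous_deriv_of_contDiff_uncurry (f := fun φ w => v w φ)
        ((hv_smooth.comp (contDiff_snd.prodMk contDiff_fst)).of_le (by norm_num))))
    (fun x hx y hy hxy => add_lt_add_of_le_of_lt (hT' hxy.le) (hv' φ₀ hφ₀ hx hy hxy))
    hz₀ hfoc fun φ hφ _ hr => zopt_eq_of_deriv_add_deriv_eq_one hzopt hT
      (hTc.differentiable one_ne_zero) hT' hφ
      ((hv_smooth.comp (contDiff_id.prodMk contDiff_const)).differentiable (by norm_num))
      (hv' φ hφ).monotoneOn hr

theorem tendsto_Uphi {l : Filter ℝ} {T : ℝ → ℝ} {φ₀ z₀ : ℝ}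
    (hz : Tendsto (zopt T) l (𝓝 z₀)) (hl : l ≤ 𝓝 φ₀) (hT : Continuous T)
    (hv : Continuous (fun p : ℝ × ℝ => v p.1 p.2)) :
    Tendsto (Uphi v zopt T) l (𝓝 (z₀ - T z₀ - v z₀ φ₀)) :=
  (((continuous_fst.sub (hT.comp continuous_fst)).sub hv).tendsto (z₀, φ₀)).comp
    (hz.prodMk_nhds hl)

end Model

theorem stmt8_general (philo phihi : ℝ) (hphi : philo < phihi)
    (zbar : ℝ)
    (v : ℝ → ℝ → ℝ)
    (hv_smooth : ContDiff ℝ 3 (fun p : ℝ × ℝ => v p.1 p.2))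
    (hv_i : ∀ z ∈ Icc (0:ℝ) zbar, ∀ φ ∈ Icc philo phihi, 0 < deriv (fun w => v w φ) z)
    (hv_iii : ∀ z ∈ Icc (0:ℝ) zbar, ∀ φ ∈ Icc philo phihi,
      0 < deriv (deriv (fun w => v w φ)) z)
    (zstar : ℝ → ℝ)
    (hzstar : ∀ φ ∈ Icc philo phihi, zstar φ ∈ Icc (0:ℝ) zbar ∧
      deriv (fun w => v w φ) (zstar φ) = 1)
    (TT : Set (ℝ → ℝ))
    (hTT_conv : ∀ T, MemS zbar (zstar philo) T →
      ConvexOn ℝ (Icc (zstar philo) zbar) T → T ∈ TT)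
    (zopt : (ℝ → ℝ) → ℝ → ℝ)
    (hzopt : ∀ T ∈ TT, ∀ φ ∈ Icc philo phihi,
      zopt T φ ∈ Icc (0:ℝ) zbar ∧
      IsMaxOn (fun z => z - T z - v z φ) (Icc (0:ℝ) zbar) (zopt T φ) ∧
      ∀ z ∈ Icc (0:ℝ) zbar,
        IsMaxOn (fun w => w - T w - v w φ) (Icc (0:ℝ) zbar) z → z = zopt T φ)
    (g : ℝ → ℝ → ℝ → ℝ)
    (hg_smooth : ContDiff ℝ 3 (fun p : ℝ × ℝ × ℝ => g p.1 p.2.1 p.2.2))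
    (hnsu : ¬ StructUtil philo phihi v zstar g) :
    ∃ φ₁ φ₂, philo < φ₁ ∧ φ₁ < φ₂ ∧ φ₂ < phihi ∧
      ∃ T ∈ TT, ContDiff ℝ 3 T ∧ StrictMonoOn T (Icc (zstar philo) zbar) ∧
        StrictConvexOn ℝ (Icc (zstar philo) zbar) T ∧
        ((∀ φ ∈ Ioo φ₁ φ₂,
            deriv (fun w => g (Uphi v zopt T φ + v w φ) w φ) (zopt T φ) < 0) ∨
         (∀ φ ∈ Ioo φ₁ φ₂,
            0 < deriv (fun w => g (Uphi v zopt T φ + v w φ) w φ) (zopt T φ))) := by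
  have hĝ := contDiff_uncurry_reparamWeight hv_smooth hg_smooth
  have hv' := fun φ (hφ : φ ∈ Icc philo phihi) => strictMonoOn_deriv_slice hv_smooth hv_iii hφ
  obtain ⟨φ₀, hφ₀, u, z₀, hlo, hhi, hD₀⟩ :=
    exists_deriv_reparamWeight_ne_zero (hĝ.of_le (by norm_num)) hnsu
  obtain ⟨hstar₀, hfoc₀⟩ := hzstar φ₀ hφ₀
  have hz₀ : z₀ ∈ Ioo 0 zbar :=
    ⟨(hzstar philo ⟨le_rfl, hphi.le⟩).1.1.trans_lt hlo, hhi.trans_le hstar₀.2⟩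
  have hrate : 1 - deriv (fun w => v w φ₀) z₀ ∈ Ioo 0 1 :=
    ⟨sub_pos.2 (hfoc₀ ▸ hv' φ₀ hφ₀ (Ioo_subset_Icc_self hz₀) hstar₀ hhi),
      sub_lt_self _ (hv_i z₀ (Ioo_subset_Icc_self hz₀) φ₀ hφ₀)⟩
  obtain ⟨T, hTS, hT', hT'z₀, hTz₀, hTmono, hTconv⟩ :=
    exists_convex_tax zbar (z₀ - v z₀ φ₀ - u) hlo hrate
  have hT : T ∈ TT := hTT_conv T hTS hTconv.convexOn
  have hzopt_lim := tendsto_zopt_nhdsWithin hv_smooth hv' hzopt hT (hTS.1.of_le (by norm_num))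
    hT' hφ₀ hz₀ (by rw [hT'z₀]; ring)
  have hU_lim := tendsto_Uphi hzopt_lim nhdsWithin_le_nhds hTS.1.continuous hv_smooth.continuous
  rw [hTz₀, show z₀ - (z₀ - v z₀ φ₀ - u) - v z₀ φ₀ = u by ring] at hU_lim
  have hD_lim : Tendsto (fun φ => deriv (fun w => g (Uphi v zopt T φ + v w φ) w φ) (zopt T φ))
      (𝓝[Icc philo phihi] φ₀) (𝓝 (deriv (fun w => g (u + v w φ₀) w φ₀) z₀)) :=
    ((continuous_deriv_of_contDiff_uncurry (hĝ.of_le (by norm_num))).tendsto ((u, φ₀), z₀)).comp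
      ((hU_lim.prodMk_nhds nhdsWithin_le_nhds).prodMk_nhds hzopt_lim)
  obtain ⟨φ₁, φ₂, h₁, h₁₂, h₂, hsign⟩ := hD_lim.exists_Ioo_forall_neg_or_forall_pos hD₀ hphi hφ₀
  exact ⟨φ₁, φ₂, h₁, h₁₂, h₂, T, hT, hTS.1, hTmono, hTconv, hsign⟩

/-- **Corollary (Sher 2021, Corollary `convex tax policy corollary`).**  If `g` is not
structurally utilitarian, there are types `φ₁ < φ₂` and a C³ tax policy `T ∈ 𝒯̂`,
strictly increasing and strictly convex on `[z_{φ̲}, z̄]`, such that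
`∂ĝ_φ/∂z(U_φ(T), z_φ(T))` is either negative for all `φ ∈ (φ₁,φ₂)` or positive for all
`φ ∈ (φ₁,φ₂)`, where `ĝ_φ(u,z) = g_φ(u + v_φ(z), z)`. -/
theorem stmt8 (philo phihi : ℝ) (hphi : philo < phihi)
    (zbar : ℝ) (hzbar : 0 < zbar)
    (v : ℝ → ℝ → ℝ)
    (hv_smooth : ContDiff ℝ 3 (fun p : ℝ × ℝ => v p.1 p.2))
    (hv_i : ∀ z ∈ Icc (0:ℝ) zbar, ∀ φ ∈ Icc philo phihi, 0 < deriv (fun w => v w φ) z)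
    (hv_ii : ∀ z ∈ Icc (0:ℝ) zbar, ∀ φ ∈ Icc philo phihi,
      deriv (fun p => deriv (fun w => v w p) z) φ < 0)
    (hv_iii : ∀ z ∈ Icc (0:ℝ) zbar, ∀ φ ∈ Icc philo phihi,
      0 < deriv (deriv (fun w => v w φ)) z)
    (hv_iv : deriv (fun w => v w philo) 0 < 1)
    (hv_v : 1 < deriv (fun w => v w phihi) zbar)
    (zstar : ℝ → ℝ)
    (hzstar : ∀ φ ∈ Icc philo phihi, zstar φ ∈ Icc (0:ℝ) zbar ∧
      deriv (fun w => v w φ) (zstar φ) = 1)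
    (TT : Set (ℝ → ℝ))
    (hTT_sub : ∀ T ∈ TT, MemS zbar (zstar philo) T)
    (hTT_conv : ∀ T, MemS zbar (zstar philo) T →
      ConvexOn ℝ (Icc (zstar philo) zbar) T → T ∈ TT)
    (zopt : (ℝ → ℝ) → ℝ → ℝ)
    (hzopt : ∀ T ∈ TT, ∀ φ ∈ Icc philo phihi,
      zopt T φ ∈ Icc (0:ℝ) zbar ∧
      IsMaxOn (fun z => z - T z - v z φ) (Icc (0:ℝ) zbar) (zopt T φ) ∧
      ∀ z ∈ Icc (0:ℝ) zbar,
        IsMaxOn (fun w => w - T w - v w φ) (Icc (0:ℝ) zbar) z → z = zopt T φ)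
    (g : ℝ → ℝ → ℝ → ℝ)
    (hg_smooth : ContDiff ℝ 3 (fun p : ℝ × ℝ × ℝ => g p.1 p.2.1 p.2.2))
    (hg_pos : ∀ c z φ, 0 < g c z φ)
    (hnsu : ¬ StructUtil philo phihi v zstar g) :
    ∃ φ₁ φ₂, philo < φ₁ ∧ φ₁ < φ₂ ∧ φ₂ < phihi ∧
      ∃ T ∈ TT, ContDiff ℝ 3 T ∧ StrictMonoOn T (Icc (zstar philo) zbar) ∧
        StrictConvexOn ℝ (Icc (zstar philo) zbar) T ∧
        ((∀ φ ∈ Ioo φ₁ φ₂,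
            deriv (fun w => g (Uphi v zopt T φ + v w φ) w φ) (zopt T φ) < 0) ∨
         (∀ φ ∈ Ioo φ₁ φ₂,
            0 < deriv (fun w => g (Uphi v zopt T φ + v w φ) w φ) (zopt T φ))) :=
  stmt8_general philo phihi hphi zbar v hv_smooth hv_i hv_iii zstar hzstar TT hTT_conv zopt hzopt g
    hg_smooth hnsu

end Stmt8
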